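/- A 9-node system is 3-resilient. That is, for N = 9, for every A ⊆ P with |A| = 3, every fault vector e : P → ℝ supported on A with e p ≠ 0 for all p ∈ A, and every δ : Fin 9 → ℝ with δ 0 = 0, setting b = D δ + e: (i) for every E ⊆ P with |E| < 3 the equation system for (E, b) has no solution; (ii) the equation system for (A, b) has exactly one solution, namely (δ, e); (iii) for every E ⊆ P with |E| = 3 and E ≠ A the equation system for (E, b) has no solution. -/
import Mathlib


/-- The peer-to-peer synchronization sessions: ordered pairs `(i, j)` of nodes with `j < i`. -/
abbrev Pair (N : ℕ) := {p : Fin N × Fin N // p.2 < p.1}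

/-- The difference map `(D δ) (i, j) = δ i - δ j`. -/
def Dmap {N : ℕ} (δ : Fin N → ℝ) : Pair N → ℝ := fun p => δ p.1.1 - δ p.1.2

/-- The indicator vector of a pair `a`. -/
def ind {N : ℕ} (a : Pair N) : Pair N → ℝ := fun p => if p = a then 1 else 0

/-- `(dh, eh)` is a solution of the equation system for the assumed fault set `E`
and measurements `b`: `dh 0 = 0`, `eh` is supported on `E`, and `D dh + eh = b`. -/
def IsSolution {N : ℕ} (hN : 0 < N) (E : Set (Pair N)) (b : Pair N → ℝ)
    (dh : Fin N → ℝ) (eh : Pair N → ℝ) : Prop :=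
  dh ⟨0, hN⟩ = 0 ∧ (∀ p ∉ E, eh p = 0) ∧ ∀ p, Dmap dh p + eh p = b p

def pe {N : ℕ} (a b : Fin N) (h : a ≠ b) : Pair N := ⟨(max a b, min a b), min_lt_max.2 h⟩

lemma pe_eq {N : ℕ} {a b c d : Fin N} {h : a ≠ b} {h' : c ≠ d}
    (he : pe a b h = pe c d h') : (a = c ∧ b = d) ∨ (a = d ∧ b = c) := by
  have h1 : max a b = max c d := congrArg (fun p => p.1.1) he
  have h2 : min a b = min c d := congrArg (fun p => p.1.2) he
  rcases le_total a b with hab | hab <;> rcases le_total c d with hcd | hcd <;>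
    simp [max_eq_right, max_eq_left, min_eq_left, min_eq_right, hab, hcd] at h1 h2 <;> tauto

lemma pe_spec {N : ℕ} {S : Set (Pair N)} {γ : Fin N → ℝ}
    (hγ : ∀ p ∉ S, γ p.1.1 = γ p.1.2) {a b : Fin N} (h : a ≠ b)
    (hm : pe a b h ∉ S) : γ a = γ b := by
  have := hγ _ hm
  rcases le_total a b with hab | hab <;>
    simp [pe, max_eq_right, max_eq_left, min_eq_left, min_eq_right, hab] at this <;>
    [exact this.symm; exact this]

lemma key {S : Set (Pair 9)} (hS : S.ncard ≤ 6) {γ : Fin 9 → ℝ}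
    (hγ : ∀ p ∉ S, γ p.1.1 = γ p.1.2) (i : Fin 9) : γ i = γ 0 := by
  classical
  by_cases hi0 : i = 0
  · rw [hi0]
  by_cases hP : ∃ k : Fin 9, (k = 0 ∧ pe i 0 hi0 ∉ S) ∨
      ∃ (hk0 : k ≠ 0) (hki : k ≠ i), pe i k (Ne.symm hki) ∉ S ∧ pe k 0 hk0 ∉ S
  · obtain ⟨k, hk⟩ := hP
    rcases hk with ⟨-, hm⟩ | ⟨hk0, hki, hm1, hm2⟩
    · exact pe_spec hγ hi0 hm
    · exact (pe_spec hγ (Ne.symm hki) hm1).trans (pe_spec hγ hk0 hm2)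
  push_neg at hP
  set f : Fin 9 → Pair 9 := fun k =>
    if hk0 : k = 0 then pe i 0 hi0
    else if hki : k = i then pe i 0 hi0
    else if pe i k (Ne.symm hki) ∈ S then pe i k (Ne.symm hki) else pe k 0 hk0 with hf
  have hmem : ∀ k, k ≠ i → f k ∈ S := by
    intro k hki
    by_cases hk0 : k = 0
    · subst hk0; simp only [hf, dif_pos rfl]
      exact ((hP 0).1 rfl : _)
    · simp only [hf, dif_neg hk0, dif_neg hki]
      by_cases hm : pe i k (Ne.symm hki) ∈ S
      · simp only [if_pos hm]; exact hm
      · simp only [if_neg hm]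
        exact (hP k).2 hk0 hki hm
  have hinj : Set.InjOn f (Finset.univ.erase i : Finset (Fin 9)) := by
    intro k hk k' hk' hfe
    simp only [Finset.coe_erase, Set.mem_diff, Finset.coe_univ, Set.mem_univ, true_and,
      Set.mem_singleton_iff] at hk hk'
    by_cases hk0 : k = 0 <;> by_cases hk0' : k' = 0
    · rw [hk0, hk0']
    · exfalso
      simp only [hf, dif_pos hk0, dif_neg hk0', dif_neg hk'] at hfe
      split_ifs at hfe with hm
      · rcases pe_eq hfe with ⟨h1, h2⟩ | ⟨h1, h2⟩
        · exact hk0' h2.symm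
        · exact hi0 h2.symm
      · rcases pe_eq hfe with ⟨h1, h2⟩ | ⟨h1, h2⟩
        · exact hk' h1.symm
        · exact hi0 h1
    · exfalso
      simp only [hf, dif_pos hk0', dif_neg hk0, dif_neg hk] at hfe
      split_ifs at hfe with hm
      · rcases pe_eq hfe with ⟨h1, h2⟩ | ⟨h1, h2⟩
        · exact hk0 h2
        · exact hi0 h1
      · rcases pe_eq hfe with ⟨h1, h2⟩ | ⟨h1, h2⟩
        · exact hk h1
        · exact hk0 h1
    · simp only [hf, dif_neg hk0, dif_neg hk0', dif_neg hk, dif_neg hk'] at hfe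
      split_ifs at hfe with hm hm' hm''
      · rcases pe_eq hfe with ⟨h1, h2⟩ | ⟨h1, h2⟩
        · exact h2
        · exact absurd h1.symm hk'
      · rcases pe_eq hfe with ⟨h1, h2⟩ | ⟨h1, h2⟩
        · exact absurd h1.symm hk'
        · exact absurd h1 hi0
      · rcases pe_eq hfe with ⟨h1, h2⟩ | ⟨h1, h2⟩
        · exact absurd h1 hk
        · exact h1
      · rcases pe_eq hfe with ⟨h1, h2⟩ | ⟨h1, h2⟩
        · exact h1
        · exact absurd h1 hk0
  exfalso
  have hsub : f '' (Finset.univ.erase i : Finset (Fin 9)) ⊆ S := by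
    rintro _ ⟨k, hk, rfl⟩
    simp only [Finset.coe_erase, Set.mem_diff, Set.mem_singleton_iff] at hk
    exact hmem k hk.2
  have h8 : (f '' (Finset.univ.erase i : Finset (Fin 9))).ncard = 8 := by
    rw [Set.ncard_image_of_injOn hinj, Set.ncard_coe_finset]
    simp [Finset.card_erase_of_mem]
  have := Set.ncard_le_ncard hsub (Set.toFinite S)
  omega

lemma main_unique (A E : Set (Pair 9)) (hE : E.ncard ≤ 3)
    (e : Pair 9 → ℝ) (he : ∀ p ∉ A, e p = 0) (he' : ∀ p ∈ A, e p ≠ 0)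
    (hAcard : A.ncard = 3)
    (δ : Fin 9 → ℝ) (hδ : δ 0 = 0) (dh : Fin 9 → ℝ) (eh : Pair 9 → ℝ)
    (hsol : IsSolution (by norm_num) E (fun p => Dmap δ p + e p) dh eh) :
    dh = δ ∧ eh = e ∧ A ⊆ E := by
  obtain ⟨h0, hsupp, heq⟩ := hsol
  have h0' : dh 0 = 0 := h0
  set γ : Fin 9 → ℝ := fun j => dh j - δ j with hγdef
  have hγ : ∀ p ∉ A ∪ E, γ p.1.1 = γ p.1.2 := by
    intro p hp
    rw [Set.mem_union] at hp
    push_neg at hp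
    have h1 := he p hp.1
    have h2 := hsupp p hp.2
    have h3 := heq p
    simp only [Dmap, h1, h2, add_zero] at h3
    simp only [hγdef]
    linarith
  have hcard : (A ∪ E).ncard ≤ 6 := by
    have := Set.ncard_union_le A E
    omega
  have hzero : ∀ i, γ i = 0 := by
    intro i
    have := key hcard hγ i
    simp only [hγdef] at this ⊢
    rw [this, h0', hδ]
    ring
  have hdh : dh = δ := by
    funext j
    have := hzero j
    simp only [hγdef] at this
    linarith
  subst hdh
  have heh : eh = e := by
    funext p
    have h : Dmap dh p + eh p = Dmap dh p + e p := heq p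
    linarith
  subst heh
  refine ⟨rfl, rfl, fun p hp => ?_⟩
  by_contra hpE
  exact he' p hp (hsupp p hpE)

/-- A 9-node system is 3-resilient. -/
theorem stmt_19 (A : Set (Pair 9)) (hA : A.ncard = 3)
    (e : Pair 9 → ℝ) (he : ∀ p ∉ A, e p = 0) (he' : ∀ p ∈ A, e p ≠ 0)
    (δ : Fin 9 → ℝ) (hδ : δ 0 = 0) :
    (∀ E : Set (Pair 9), E.ncard < 3 →
      ¬ ∃ (dh : Fin 9 → ℝ) (eh : Pair 9 → ℝ),
        IsSolution (by norm_num) E (fun p => Dmap δ p + e p) dh eh) ∧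
    (∀ (dh : Fin 9 → ℝ) (eh : Pair 9 → ℝ),
      IsSolution (by norm_num) A (fun p => Dmap δ p + e p) dh eh ↔
        dh = δ ∧ eh = e) ∧
    (∀ E : Set (Pair 9), E.ncard = 3 → E ≠ A →
      ¬ ∃ (dh : Fin 9 → ℝ) (eh : Pair 9 → ℝ),
        IsSolution (by norm_num) E (fun p => Dmap δ p + e p) dh eh) := by
  refine ⟨?_, ?_, ?_⟩
  · rintro E hE ⟨dh, eh, hsol⟩
    obtain ⟨-, -, hAE⟩ := main_unique A E (by omega) e he he' hA δ hδ dh eh hsol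
    have := Set.ncard_le_ncard hAE (Set.toFinite E)
    omega
  · intro dh eh
    constructor
    · intro hsol
      obtain ⟨h1, h2, -⟩ := main_unique A A (by omega) e he he' hA δ hδ dh eh hsol
      exact ⟨h1, h2⟩
    · rintro ⟨rfl, rfl⟩
      exact ⟨hδ, he, fun p => rfl⟩
  · rintro E hE hEA ⟨dh, eh, hsol⟩
    obtain ⟨-, -, hAE⟩ := main_unique A E (by omega) e he he' hA δ hδ dh eh hsol
    exact hEA (Set.eq_of_subset_of_ncard_le hAE (by omega) (Set.toFinite E)).symm
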